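/- arXiv:1603.01496 — 2 statements merged into one kernel-verified Lean document; each statement's English description precedes it below -/
import Mathlib

section
/- Let n ≥ 2 and let Z_n denote the additive cyclic group {0, 1, …, n−1}. The zigzag sequence (0, 1, n−1, 2, n−2, 3, n−3, …) — that is, the arrangement (a_1, …, a_n) with a_1 = 0, a_{2i} = i and a_{2i+1} = n−i for i ≥ 1 — is a terrace for Z_n; moreover, when n is even it is a directed terrace. -/
/-- The list of successive differences `aᵢ₊₁ - aᵢ` of a list of additive group elements. -/
def succDiffs {G : Type*} [AddGroup G] (l : List G) : List G :=
  List.zipWith (fun x y => y - x) l l.tail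

/-- A list is an arrangement of the elements of `G` if it lists every element exactly once. -/
def IsAddArrangement {G : Type*} (l : List G) : Prop :=
  l.Nodup ∧ ∀ g : G, g ∈ l

open scoped Classical in
/-- A terrace (additive notation): an arrangement whose list of successive differences contains
each involution exactly once and, for each `x` with `x + x ≠ 0`, contains `x` and `-x`
twice in total. -/
def IsAddTerrace {G : Type*} [AddGroup G] (l : List G) : Prop :=
  IsAddArrangement l ∧
  (∀ z : G, z ≠ 0 → z + z = 0 → (succDiffs l).count z = 1) ∧
  (∀ x : G, x + x ≠ 0 → (succDiffs l).count x + (succDiffs l).count (-x) = 2)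

/-- A directed terrace (additive notation): an arrangement whose successive differences are
pairwise distinct. -/
def IsAddDirectedTerrace {G : Type*} [AddGroup G] (l : List G) : Prop :=
  IsAddArrangement l ∧ (succDiffs l).Nodup

/-- The zigzag arrangement (0, 1, n-1, 2, n-2, 3, n-3, …) of `ZMod n`:
a₁ = 0, a₂ᵢ = i and a₂ᵢ₊₁ = n - i = -i (1-indexed); with 0-indexed position k this is
-(k/2) for even k and (k+1)/2 for odd k. -/
def zigzag (n : ℕ) : List (ZMod n) :=
  List.ofFn (fun k : Fin n =>
    if (k : ℕ) % 2 = 0 then -((((k : ℕ) / 2 : ℕ) : ZMod n))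
    else ((((k : ℕ) + 1) / 2 : ℕ) : ZMod n))

namespace ZZ

/-- the zigzag function -/
def zf (n : ℕ) : Fin n → ZMod n := fun k =>
  if (k : ℕ) % 2 = 0 then -((((k : ℕ) / 2 : ℕ) : ZMod n))
  else ((((k : ℕ) + 1) / 2 : ℕ) : ZMod n)

lemma zigzag_eq (n : ℕ) : zigzag n = List.ofFn (zf n) := rfl

/-- natural number representative of `zf` -/
def zrep (n k : ℕ) : ℕ :=
  if k % 2 = 0 then (if k = 0 then 0 else n - k / 2) else (k + 1) / 2

lemma zrep_lt {n k : ℕ} (hn : 2 ≤ n) (hk : k < n) : zrep n k < n := by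
  unfold zrep; split_ifs <;> omega

lemma zf_eq_cast {n : ℕ} (k : Fin n) : zf n k = ((zrep n (k : ℕ) : ℕ) : ZMod n) := by
  unfold zf zrep
  rcases Nat.even_or_odd (k : ℕ) with h | h
  · have h2 : (k : ℕ) % 2 = 0 := Nat.even_iff.mp h
    rw [if_pos h2, if_pos h2]
    by_cases h0 : (k : ℕ) = 0
    · simp [h0]
    · have hle : (k : ℕ) / 2 ≤ n := by have := k.2; omega
      rw [if_neg h0, Nat.cast_sub hle, ZMod.natCast_self, zero_sub]
  · have h2 : (k : ℕ) % 2 = 1 := Nat.odd_iff.mp h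
    rw [if_neg (by omega), if_neg (by omega)]

lemma zrep_inj {n j k : ℕ} (hn : 2 ≤ n) (hj : j < n) (hk : k < n)
    (h : zrep n j = zrep n k) : j = k := by
  unfold zrep at h; split_ifs at h <;> omega

lemma zf_inj {n : ℕ} (hn : 2 ≤ n) : Function.Injective (zf n) := by
  haveI : NeZero n := ⟨by omega⟩
  intro j k h
  rw [zf_eq_cast, zf_eq_cast] at h
  have h2 := congrArg ZMod.val h
  rw [ZMod.val_cast_of_lt (zrep_lt hn j.2), ZMod.val_cast_of_lt (zrep_lt hn k.2)] at h2
  exact Fin.ext (zrep_inj hn j.2 k.2 h2)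

lemma zf_surj {n : ℕ} (hn : 2 ≤ n) : Function.Surjective (zf n) := by
  haveI : NeZero n := ⟨by omega⟩
  have hc : Fintype.card (Fin n) = Fintype.card (ZMod n) := by simp [ZMod.card]
  exact (((Fintype.bijective_iff_injective_and_card _).mpr ⟨zf_inj hn, hc⟩)).2

/-- the difference function -/
def df (n : ℕ) : Fin (n - 1) → ZMod n := fun k =>
  if (k : ℕ) % 2 = 0 then (((k : ℕ) + 1 : ℕ) : ZMod n) else -(((k : ℕ) + 1 : ℕ) : ZMod n)

lemma succDiffs_zigzag {n : ℕ} (hn : 2 ≤ n) :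
    succDiffs (zigzag n) = List.ofFn (df n) := by
  apply List.ext_getElem
  · simp [succDiffs, zigzag]
  · intro i h1 h2
    have hi : i < n - 1 := by simpa using h2
    have hlen : i + 1 < (zigzag n).length := by simp [zigzag]; omega
    simp only [succDiffs, List.getElem_zipWith, List.getElem_tail, zigzag_eq,
      List.getElem_ofFn]
    show zf n ⟨i + 1, _⟩ - zf n ⟨i, _⟩ = df n ⟨i, _⟩
    unfold zf df
    simp only [Fin.val_mk]
    rcases Nat.even_or_odd i with h | h
    · have h2 : i % 2 = 0 := Nat.even_iff.mp h
      have h3 : (i + 1) % 2 = 1 := by omega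
      rw [if_neg (by omega), if_pos h2, if_pos h2, sub_neg_eq_add, ← Nat.cast_add]
      exact congrArg _ (by omega)
    · have h2 : i % 2 = 1 := Nat.odd_iff.mp h
      have h3 : (i + 1) % 2 = 0 := by omega
      rw [if_pos h3, if_neg (by omega), if_neg (by omega), sub_eq_add_neg, ← neg_add,
        ← Nat.cast_add]
      exact congrArg _ (congrArg _ (by omega))


lemma count_instEq {α : Type*} (i1 i2 : DecidableEq α) (a : α) (l : List α) :
    @List.count α (@instBEqOfDecidableEq α i1) a l
      = @List.count α (@instBEqOfDecidableEq α i2) a l := by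
  have : i1 = i2 := funext fun a => funext fun b => Subsingleton.elim _ _
  rw [this]

lemma count_ofFn {α : Type*} [DecidableEq α] {N : ℕ} (f : Fin N → α) (a : α) :
    (List.ofFn f).count a = (Finset.univ.filter fun i => f i = a).card := by
  classical
  rw [← Multiset.coe_count, List.ofFn_eq_map, ← Multiset.map_coe]
  rw [Multiset.count_map]
  rw [Fin.univ_def]
  simp only [Finset.filter, Finset.card_mk, Multiset.filter_coe, Multiset.coe_card]
  congr 1
  apply List.filter_congr
  intro x _
  simp [eq_comm]

lemma df_ne_zero {n : ℕ} (hn : 2 ≤ n) (k : Fin (n - 1)) : df n k ≠ 0 := by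
  haveI : NeZero n := ⟨by omega⟩
  have hk : (k : ℕ) + 1 < n := by have := k.2; omega
  have base : (((k : ℕ) + 1 : ℕ) : ZMod n) ≠ 0 := by
    intro h
    have h2 := congrArg ZMod.val h
    rw [ZMod.val_cast_of_lt hk] at h2
    simp at h2
  unfold df
  split_ifs
  · exact base
  · rw [Ne, neg_eq_zero]; exact base

lemma df_eq_iff {n : ℕ} (hn : 2 ≤ n) {z : ZMod n} (hz : z ≠ 0) (k : Fin (n - 1)) :
    df n k = z ↔ (((k : ℕ) % 2 = 0 ∧ (k : ℕ) + 1 = z.val) ∨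
      ((k : ℕ) % 2 = 1 ∧ (k : ℕ) + 1 = n - z.val)) := by
  haveI : NeZero n := ⟨by omega⟩
  haveI : NeZero z := ⟨hz⟩
  have hk : (k : ℕ) + 1 < n := by have := k.2; omega
  have hcast : ∀ w : ZMod n, ((((k : ℕ) + 1 : ℕ) : ZMod n) = w ↔ (k : ℕ) + 1 = w.val) := by
    intro w
    constructor
    · intro h; have h2 := congrArg ZMod.val h; rwa [ZMod.val_cast_of_lt hk] at h2
    · intro h; rw [h, ZMod.natCast_val, ZMod.cast_id]
  unfold df
  rcases Nat.even_or_odd (k : ℕ) with h | h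
  · have h2 : (k : ℕ) % 2 = 0 := Nat.even_iff.mp h
    rw [if_pos h2, hcast]
    constructor
    · intro hh; exact Or.inl ⟨h2, hh⟩
    · rintro (⟨_, hh⟩ | ⟨hh, _⟩)
      · exact hh
      · omega
  · have h2 : (k : ℕ) % 2 = 1 := Nat.odd_iff.mp h
    rw [if_neg (by omega), neg_eq_iff_eq_neg, hcast (-z), ZMod.val_neg_of_ne_zero z]
    constructor
    · intro hh; exact Or.inr ⟨h2, hh⟩
    · rintro (⟨hh, _⟩ | ⟨_, hh⟩)
      · omega
      · exact hh

def drep (n k : ℕ) : ℕ := if k % 2 = 0 then k + 1 else n - (k + 1)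

lemma drep_lt {n k : ℕ} (hn : 2 ≤ n) (hk : k < n - 1) : drep n k < n := by
  unfold drep; split_ifs <;> omega

lemma df_eq_cast {n : ℕ} (hn : 2 ≤ n) (k : Fin (n - 1)) :
    df n k = ((drep n (k : ℕ) : ℕ) : ZMod n) := by
  unfold df drep
  have hk : (k : ℕ) + 1 < n := by have := k.2; omega
  split_ifs
  · rfl
  · rw [Nat.cast_sub (by omega), ZMod.natCast_self, zero_sub]

lemma df_inj {n : ℕ} (hn : 2 ≤ n) (he : n % 2 = 0) : Function.Injective (df n) := by
  haveI : NeZero n := ⟨by omega⟩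
  intro j k h
  rw [df_eq_cast hn, df_eq_cast hn] at h
  have h2 := congrArg ZMod.val h
  rw [ZMod.val_cast_of_lt (drep_lt hn j.2), ZMod.val_cast_of_lt (drep_lt hn k.2)] at h2
  have hj := j.2
  have hk := k.2
  have : (j : ℕ) = (k : ℕ) := by unfold drep at h2; split_ifs at h2 <;> omega
  exact Fin.ext this

lemma mem_df {n : ℕ} (hn : 2 ≤ n) (he : n % 2 = 0) {z : ZMod n} (hz : z ≠ 0) :
    z ∈ List.ofFn (df n) := by
  haveI : NeZero n := ⟨by omega⟩
  classical
  have himg : (Finset.univ.image (df n)) = Finset.univ.erase 0 := by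
    apply Finset.eq_of_subset_of_card_le
    · intro x hx
      simp only [Finset.mem_image] at hx
      obtain ⟨k, _, rfl⟩ := hx
      exact Finset.mem_erase.mpr ⟨df_ne_zero hn k, Finset.mem_univ _⟩
    · rw [Finset.card_erase_of_mem (Finset.mem_univ _),
        Finset.card_image_of_injective _ (df_inj hn he)]
      simp [ZMod.card]
  have hmem : z ∈ Finset.univ.erase 0 := Finset.mem_erase.mpr ⟨hz, Finset.mem_univ _⟩
  rw [← himg] at hmem
  simp only [Finset.mem_image] at hmem
  obtain ⟨k, _, rfl⟩ := hmem
  rw [List.mem_ofFn]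
  exact ⟨k, rfl⟩

lemma count_df_odd {n : ℕ} (hn : 2 ≤ n) (ho : n % 2 = 1) {x : ZMod n} (hx : x ≠ 0)
    (hm : x.val % 2 = 1) :
    (List.ofFn (df n)).count x = 2 ∧ (List.ofFn (df n)).count (-x) = 0 := by
  haveI : NeZero n := ⟨by omega⟩
  haveI : NeZero x := ⟨hx⟩
  have hxv : x.val < n := ZMod.val_lt x
  have hxv0 : x.val ≠ 0 := fun h => hx ((ZMod.val_eq_zero x).mp h)
  have hneg : (-x).val = n - x.val := ZMod.val_neg_of_ne_zero x
  have hnx : (-x) ≠ 0 := by rw [Ne, neg_eq_zero]; exact hx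
  constructor
  · rw [count_ofFn]
    have hset : (Finset.univ.filter fun k => df n k = x) =
        {(⟨x.val - 1, by omega⟩ : Fin (n - 1)), ⟨n - x.val - 1, by omega⟩} := by
      ext k
      have hk := k.isLt
      simp only [Finset.mem_filter, Finset.mem_univ, true_and, Finset.mem_insert,
        Finset.mem_singleton, df_eq_iff hn hx, Fin.ext_iff, Fin.val_mk]
      omega
    rw [hset, Finset.card_insert_of_notMem, Finset.card_singleton]
    simp only [Finset.mem_singleton, Fin.ext_iff, Fin.val_mk]
    omega
  · rw [count_ofFn]
    rw [Finset.filter_eq_empty_iff.mpr, Finset.card_empty]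
    intro k _
    rw [df_eq_iff hn hnx, hneg]
    have hk := k.isLt
    omega

end ZZ

/-- The zigzag sequence (0, 1, n-1, 2, n-2, 3, n-3, …) is a terrace for ℤₙ, and when n is
even it is a directed terrace. -/
theorem stmt_11 (n : ℕ) (hn : 2 ≤ n) :
    IsAddTerrace (zigzag n) ∧ (Even n → IsAddDirectedTerrace (zigzag n)) := by
  haveI : NeZero n := ⟨by omega⟩
  have harr : IsAddArrangement (zigzag n) := by
    constructor
    · rw [ZZ.zigzag_eq]; exact List.nodup_ofFn.mpr (ZZ.zf_inj hn)
    · intro g; rw [ZZ.zigzag_eq, List.mem_ofFn]; exact ZZ.zf_surj hn g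
  -- the count of each nonzero element, with the standard instance
  have hcount1 : n % 2 = 0 → ∀ z : ZMod n, z ≠ 0 →
      (succDiffs (zigzag n)).count z = 1 := by
    intro he z hz
    rw [ZZ.succDiffs_zigzag hn]
    exact List.count_eq_one_of_mem (List.nodup_ofFn.mpr (ZZ.df_inj hn he))
      (ZZ.mem_df hn he hz)
  refine ⟨⟨harr, ?_, ?_⟩, ?_⟩
  · -- involutions
    intro z hz hzz
    rw [ZZ.count_instEq _ (inferInstance : DecidableEq (ZMod n))]
    rcases Nat.even_or_odd n with he | ho
    · exact hcount1 (Nat.even_iff.mp he) z hz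
    · -- no involutions when n is odd
      exfalso
      have hd : (n : ℕ) ∣ z.val + z.val := by
        have hc : ((z.val + z.val : ℕ) : ZMod n) = 0 := by
          push_cast
          rw [ZMod.natCast_val, ZMod.cast_id]
          exact hzz
        exact (ZMod.natCast_eq_zero_iff _ _).mp hc
      have hlt : z.val < n := ZMod.val_lt z
      have hz0 : z.val ≠ 0 := fun h => hz ((ZMod.val_eq_zero z).mp h)
      have hno : n % 2 = 1 := Nat.odd_iff.mp ho
      obtain ⟨c, hc⟩ := hd
      have hc2 : c < 2 := by
        by_contra hcc
        push_neg at hcc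
        have := Nat.mul_le_mul_left n hcc
        omega
      interval_cases c <;> omega
  · -- pairs
    intro x hxx
    have hx : x ≠ 0 := by rintro rfl; exact hxx (by simp)
    have hnx : -x ≠ 0 := by rw [Ne, neg_eq_zero]; exact hx
    rw [ZZ.count_instEq _ (inferInstance : DecidableEq (ZMod n)) x (succDiffs (zigzag n)),
      ZZ.count_instEq _ (inferInstance : DecidableEq (ZMod n)) (-x) (succDiffs (zigzag n))]
    rcases Nat.even_or_odd n with he | ho
    · rw [hcount1 (Nat.even_iff.mp he) x hx, hcount1 (Nat.even_iff.mp he) (-x) hnx]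
    · have hno : n % 2 = 1 := Nat.odd_iff.mp ho
      have hxv : x.val < n := ZMod.val_lt x
      have hxv0 : x.val ≠ 0 := fun h => hx ((ZMod.val_eq_zero x).mp h)
      have hneg : (-x).val = n - x.val := by
        haveI : NeZero x := ⟨hx⟩
        exact ZMod.val_neg_of_ne_zero x
      rw [ZZ.succDiffs_zigzag hn]
      rcases Nat.even_or_odd x.val with hme | hmo
      · -- x.val even, so (-x).val is odd
        have hme' : x.val % 2 = 0 := Nat.even_iff.mp hme
        have h2 := ZZ.count_df_odd hn hno hnx (by omega)
        rw [neg_neg] at h2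
        rw [h2.1, h2.2]
      · have h2 := ZZ.count_df_odd hn hno hx (Nat.odd_iff.mp hmo)
        rw [h2.1, h2.2]
  · -- directed terrace for even n
    intro he
    refine ⟨harr, ?_⟩
    rw [ZZ.succDiffs_zigzag hn]
    exact List.nodup_ofFn.mpr (ZZ.df_inj hn (Nat.even_iff.mp he))
end

section
/- There exists a Roman-2 square of order 21. -/
def mul21 (k l : Fin 21) : Fin 21 :=
  ⟨3 * ((k.1 / 3 + 2 ^ (k.1 % 3) * (l.1 / 3)) % 7) + (k.1 % 3 + l.1 % 3) % 3, by omega⟩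

def inv21 (k : Fin 21) : Fin 21 :=
  ⟨3 * ((7 - 2 ^ ((3 - k.1 % 3) % 3) * (k.1 / 3) % 7) % 7) + (3 - k.1 % 3) % 3, by omega⟩

def g21 : Fin 21 → Fin 21 :=
  ![0, 1, 3, 2, 13, 5, 9, 20, 8, 15, 18, 7, 4, 16, 19, 6, 14, 11, 10, 17, 12]

lemma m_assoc : ∀ a b c : Fin 21, mul21 (mul21 a b) c = mul21 a (mul21 b c) := by decide
lemma m_one_l : ∀ a : Fin 21, mul21 0 a = a := by decide
lemma m_one_r : ∀ a : Fin 21, mul21 a 0 = a := by decide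
lemma m_inv_l : ∀ a : Fin 21, mul21 (inv21 a) a = 0 := by decide
lemma m_inv_r : ∀ a : Fin 21, mul21 a (inv21 a) = 0 := by decide
lemma m_inv_mul : ∀ a b : Fin 21, inv21 (mul21 a b) = mul21 (inv21 b) (inv21 a) := by decide
lemma g_inj : ∀ j k : Fin 21, g21 j = g21 k → j = k := by decide
lemma key1 : ∀ j k : Fin 21, ∀ hj : (j : ℕ) + 1 < 21, ∀ hk : (k : ℕ) + 1 < 21,
    mul21 (inv21 (g21 j)) (g21 ⟨(j : ℕ) + 1, hj⟩) = mul21 (inv21 (g21 k)) (g21 ⟨(k : ℕ) + 1, hk⟩) →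
    j = k := by decide
lemma key2 : ∀ j k : Fin 21, ∀ hj : (j : ℕ) + 2 < 21, ∀ hk : (k : ℕ) + 2 < 21,
    mul21 (inv21 (g21 j)) (g21 ⟨(j : ℕ) + 2, hj⟩) = mul21 (inv21 (g21 k)) (g21 ⟨(k : ℕ) + 2, hk⟩) →
    j = k := by decide

lemma m_left_cancel {a b c : Fin 21} (h : mul21 a b = mul21 a c) : b = c := by
  have := congrArg (mul21 (inv21 a)) h
  rwa [← m_assoc, ← m_assoc, m_inv_l, m_one_l, m_one_l] at this

lemma m_right_cancel {a b c : Fin 21} (h : mul21 a c = mul21 b c) : a = b := by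
  have := congrArg (fun t => mul21 t (inv21 c)) h
  simp only [m_assoc, m_inv_r, m_one_r] at this
  exact this

lemma m_quot {a b c x y : Fin 21} (hx : mul21 a b = x) (hy : mul21 a c = y) :
    mul21 (inv21 x) y = mul21 (inv21 b) c := by
  subst hx hy
  rw [m_inv_mul, m_assoc, ← m_assoc (inv21 a) a c, m_inv_l, m_one_l]

/-- An n×n array with symbols in `Fin n` is a Latin square if each symbol occurs exactly
once in each row and each column (equivalently, each row and column map is injective). -/
def IsLatinSquare {n : ℕ} (L : Fin n → Fin n → Fin n) : Prop :=
  (∀ i, Function.Injective (L i)) ∧ (∀ j, Function.Injective (fun i => L i j))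

/-- A Latin square is row-complete if every ordered pair of distinct symbols occurs in
horizontally consecutive cells (in that order) exactly once. -/
def IsRowComplete {n : ℕ} (L : Fin n → Fin n → Fin n) : Prop :=
  ∀ x y : Fin n, x ≠ y →
    ∃! p : Fin n × Fin n, ∃ h : (p.2 : ℕ) + 1 < n,
      L p.1 p.2 = x ∧ L p.1 ⟨(p.2 : ℕ) + 1, h⟩ = y

/-- A Latin square is complete if both it and its transpose are row-complete. -/
def IsCompleteLatinSquare {n : ℕ} (L : Fin n → Fin n → Fin n) : Prop :=
  IsLatinSquare L ∧ IsRowComplete L ∧ IsRowComplete (fun i j => L j i)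

/-- A Latin square is a Roman-2 square if for each ordered pair of distinct symbols (x, y)
and each m ∈ {1, 2}, the symbol y appears m cells to the right of x (in the same row)
at most once. -/
def IsRoman2Square {n : ℕ} (L : Fin n → Fin n → Fin n) : Prop :=
  IsLatinSquare L ∧
  ∀ x y : Fin n, x ≠ y → ∀ m ∈ ({1, 2} : Set ℕ),
    {p : Fin n × Fin n | ∃ h : (p.2 : ℕ) + m < n,
      L p.1 p.2 = x ∧ L p.1 ⟨(p.2 : ℕ) + m, h⟩ = y}.Subsingleton

/-- There exists a Roman-2 square of order 21. -/
theorem stmt_17 : ∃ L : Fin 21 → Fin 21 → Fin 21, IsRoman2Square L := by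
  refine ⟨fun i j => mul21 i (g21 j), ⟨fun i j k h => g_inj j k (m_left_cancel h),
    fun j a b h => m_right_cancel h⟩, ?_⟩
  intro x y _ m hm p hp q hq
  obtain ⟨hp1, hpx, hpy⟩ := hp
  obtain ⟨hq1, hqx, hqy⟩ := hq
  have e1 := m_quot hpx hpy
  have e2 := m_quot hqx hqy
  have e3 : mul21 (inv21 (g21 p.2)) (g21 ⟨(p.2 : ℕ) + m, hp1⟩)
      = mul21 (inv21 (g21 q.2)) (g21 ⟨(q.2 : ℕ) + m, hq1⟩) := by rw [← e1, ← e2]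
  have h2 : p.2 = q.2 := by
    rcases hm with hm | hm
    · subst hm; exact key1 _ _ hp1 hq1 e3
    · simp only [Set.mem_singleton_iff] at hm; subst hm; exact key2 _ _ hp1 hq1 e3
  have h1 : p.1 = q.1 := by
    rw [h2] at hpx
    exact m_right_cancel (c := g21 q.2) (hpx.trans hqx.symm)
  exact Prod.ext h1 h2
end
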